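/- Let A be a unital K-algebra with an involutive algebra automorphism σ (σ² = id_A), q∈K nonzero, and fix any vector-space decomposition A = K·1_A ⊕ A₀. Then the linear map R : C(K,q)⊗A → A⊗C(K,q) defined by R(1⊗a) = a⊗1 and R(v⊗a) = σ(a)⊗v is an alternative twisting map, and the linear map a+bv ↦ a⊗1 + b⊗v is an isomorphism of unital algebras from the Clifford-process algebra Cl(A) onto the alternative twisted tensor product A⊗̄_R C(K,q). -/

import Mathlib

open TensorProduct LinearMap

section TwistPreamble

variable (K : Type*) [Field K]
variable (A : Type*) [NonAssocRing A] [Module K A] [SMulCommClass K A A] [IsScalarTower K A A]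
variable (B : Type*) [NonAssocRing B] [Module K B] [SMulCommClass K B B] [IsScalarTower K B B]

/-- Sweedler helper: sends `Σ aR ⊗ bR` in `A ⊗ B` to `Σ (aR * a'_r) ⊗ (bR)_r`,
where `R((bR) ⊗ a') = a'_r ⊗ (bR)_r`. -/
noncomputable def attpRmul (R : B ⊗[K] A →ₗ[K] A ⊗[K] B) (a' : A) :
    A ⊗[K] B →ₗ[K] A ⊗[K] B :=
  (rTensor B (LinearMap.mul' K A)) ∘ₗ (TensorProduct.assoc K A A B).symm.toLinearMap ∘ₗ
    (lTensor A (R ∘ₗ (TensorProduct.mk K B A).flip a'))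

/-- Sweedler helper: sends `Σ aR ⊗ b'R` in `A ⊗ B` to `Σ (aR)_r ⊗ (b'R * b_r)`,
where `R(b ⊗ aR) = (aR)_r ⊗ b_r`. -/
noncomputable def attpLmul (R : B ⊗[K] A →ₗ[K] A ⊗[K] B) (b : B) :
    A ⊗[K] B →ₗ[K] A ⊗[K] B :=
  (lTensor A ((LinearMap.mul' K B) ∘ₗ (TensorProduct.comm K B B).toLinearMap)) ∘ₗ
    (TensorProduct.assoc K A B B).toLinearMap ∘ₗ
    (rTensor B (R ∘ₗ (TensorProduct.mk K B A) b))

/-- `R : B ⊗ A → A ⊗ B` is an alternative twisting map w.r.t. the decomposition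
`A = K·1_A ⊕ A₀`. -/
def IsAltTwistingMap (A₀ : Submodule K A) (R : B ⊗[K] A →ₗ[K] A ⊗[K] B) : Prop :=
  (∀ a : A, R ((1 : B) ⊗ₜ[K] a) = a ⊗ₜ[K] (1 : B)) ∧
  (∀ b : B, R (b ⊗ₜ[K] (1 : A)) = (1 : A) ⊗ₜ[K] b) ∧
  (∀ (a a' : A) (b : B), R (b ⊗ₜ[K] (a * a')) = attpRmul K A B R a' (R (b ⊗ₜ[K] a))) ∧
  (∀ a ∈ A₀, ∀ b b' : B, R ((b * b') ⊗ₜ[K] a) = attpLmul K A B R b (R (b' ⊗ₜ[K] a)))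

/-- `m` is the multiplication of the alternative twisted tensor product `A ⊗̄_R B`:
`(1⊗b)(a'⊗b') = a'_R ⊗ b_R b'` and, for `a ∈ A₀`, `(a⊗b)(a'⊗b') = a a'_R ⊗ b' b_R`. -/
def IsAltMul (A₀ : Submodule K A) (R : B ⊗[K] A →ₗ[K] A ⊗[K] B)
    (m : A ⊗[K] B →ₗ[K] A ⊗[K] B →ₗ[K] A ⊗[K] B) : Prop :=
  (∀ (b : B) (a' : A) (b' : B),
      m ((1 : A) ⊗ₜ[K] b) (a' ⊗ₜ[K] b') = (lTensor A (mulRight K b')) (R (b ⊗ₜ[K] a'))) ∧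
  (∀ a ∈ A₀, ∀ (b : B) (a' : A) (b' : B),
      m (a ⊗ₜ[K] b) (a' ⊗ₜ[K] b') =
        (TensorProduct.map (mulLeft K a) (mulLeft K b')) (R (b ⊗ₜ[K] a')))

end TwistPreamble

/-- The multiplication of the Clifford-process algebra `Cl(A)`, on `A ⊕ A` with
`a + bv ↔ (a, b)`: `(a+bv)(c+dv) = (ac + q bσ(d)) + (ad + bσ(c))v`. -/
def clMul (K A : Type*) [Field K] [NonAssocRing A] [Module K A]
    (σ : A →ₗ[K] A) (q : K) : A × A → A × A → A × A :=
  fun x y => (x.1 * y.1 + q • (x.2 * σ y.2), x.1 * y.2 + x.2 * σ y.1)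

/-- The linear map `Cl(A) → A ⊗ C(K,q)`, `a + bv ↦ a ⊗ 1 + b ⊗ v`. -/
noncomputable def clToTensor (K A : Type*) [Field K] [NonAssocRing A] [Module K A]
    (q : K) :
    A × A →ₗ[K] A ⊗[K] (AdjoinRoot (Polynomial.X ^ 2 - Polynomial.C q)) :=
  ((TensorProduct.mk K A (AdjoinRoot (Polynomial.X ^ 2 - Polynomial.C q))).flip 1) ∘ₗ
      (LinearMap.fst K A A) +
  ((TensorProduct.mk K A (AdjoinRoot (Polynomial.X ^ 2 - Polynomial.C q))).flip
      (AdjoinRoot.root (Polynomial.X ^ 2 - Polynomial.C q))) ∘ₗ (LinearMap.snd K A A)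

/-!
With respect to the basis `1, v` of `C(K,q)`, the map `R` is the flip `b ⊗ a ↦ a ⊗ b` twisted
by `σ` on the `v`-component. Each twisting axiom is linear in its `C(K,q)`-arguments, so it
suffices to check it on `1` and `v`, where it reduces to `σ` being unital, multiplicative and
involutive (the last one because `v * v = q`).

Since `C(K,q)` is commutative, the two clauses defining the alternative product agree
(`b_R b' = b' b_R`), so `(a ⊗ b)(a' ⊗ b') = a a'_R ⊗ b' b_R` for every `a`, however `a` splits
along `K·1 ⊕ A₀`. On elements `a ⊗ 1 + b ⊗ v` this is the Clifford-process product, and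
`a + bv ↦ a ⊗ 1 + b ⊗ v` is bijective because `1, v` is a basis.
-/

open Polynomial

namespace AdjoinRoot

variable {R : Type*} [CommRing R] (q : R)

theorem root_mul_root_X_sq_sub_C : root (X ^ 2 - C q) * root (X ^ 2 - C q) = q • 1 := by
  rw [← sq, ← Algebra.algebraMap_eq_smul_one, algebraMap_eq, ← mk_X, ← mk_C, ← map_pow,
    mk_eq_mk]

variable [Nontrivial R]

noncomputable def basisX_sq_sub_C : Module.Basis (Fin 2) R (AdjoinRoot (X ^ 2 - C q)) :=
  (powerBasis' (monic_X_pow_sub_C q two_ne_zero)).basis.reindex (finCongr natDegree_X_pow_sub_C)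

@[simp] theorem basisX_sq_sub_C_zero : basisX_sq_sub_C q 0 = 1 := by
  simp only [basisX_sq_sub_C, Module.Basis.reindex_apply, PowerBasis.coe_basis, powerBasis'_gen]
  exact pow_zero _

@[simp] theorem basisX_sq_sub_C_one : basisX_sq_sub_C q 1 = root (X ^ 2 - C q) := by
  simp only [basisX_sq_sub_C, Module.Basis.reindex_apply, PowerBasis.coe_basis, powerBasis'_gen]
  exact pow_one _

theorem linearMap_ext_X_sq_sub_C {M : Type*} [AddCommMonoid M] [Module R M]
    {f g : AdjoinRoot (X ^ 2 - C q) →ₗ[R] M} (h1 : f 1 = g 1)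
    (hroot : f (root (X ^ 2 - C q)) = g (root (X ^ 2 - C q))) : f = g :=
  (basisX_sq_sub_C q).ext fun i => by fin_cases i <;> simpa

end AdjoinRoot

theorem attpRmul_tmul {K A B : Type*} [Field K]
    [NonAssocRing A] [Module K A] [SMulCommClass K A A] [IsScalarTower K A A]
    [NonAssocRing B] [Module K B] (R : B ⊗[K] A →ₗ[K] A ⊗[K] B) (a a' : A) (b : B) :
    attpRmul K A B R a' (a ⊗ₜ b) = rTensor B (mulLeft K a) (R (b ⊗ₜ a')) := by
  simp only [attpRmul, coe_comp, Function.comp_apply, lTensor_tmul, flip_apply, mk_apply,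
    LinearEquiv.coe_coe]
  induction R (b ⊗ₜ a') using TensorProduct.induction_on with
  | zero => simp
  | tmul x y => simp
  | add x y hx hy => simp_all [tmul_add]

theorem attpLmul_tmul {K A B : Type*} [Field K] [NonAssocRing A] [Module K A]
    [NonAssocRing B] [Module K B] [SMulCommClass K B B] [IsScalarTower K B B]
    (R : B ⊗[K] A →ₗ[K] A ⊗[K] B) (a : A) (b b' : B) :
    attpLmul K A B R b (a ⊗ₜ b') = lTensor A (mulLeft K b') (R (b ⊗ₜ a)) := by
  simp only [attpLmul, coe_comp, Function.comp_apply, rTensor_tmul, mk_apply,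
    LinearEquiv.coe_coe]
  induction R (b ⊗ₜ a) using TensorProduct.induction_on with
  | zero => simp
  | tmul x y => simp
  | add x y hx hy => simp_all [add_tmul]

theorem exists_eq_smul_one_add_of_codisjoint {K A : Type*} [Field K] [NonAssocRing A]
    [Module K A] {A₀ : Submodule K A} (hdec : Codisjoint (Submodule.span K {(1 : A)}) A₀)
    (a : A) : ∃ k : K, ∃ a₀ ∈ A₀, a = k • 1 + a₀ := by
  obtain ⟨y, hy, a₀, ha₀, rfl⟩ := Submodule.mem_sup.mp (hdec.eq_top ▸ Submodule.mem_top (x := a))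
  obtain ⟨k, rfl⟩ := Submodule.mem_span_singleton.mp hy
  exact ⟨k, a₀, ha₀, rfl⟩

theorem IsAltMul.apply_tmul_tmul {K A B : Type*} [Field K]
    [NonAssocRing A] [Module K A] [SMulCommClass K A A] [IsScalarTower K A A]
    [CommRing B] [Algebra K B] {A₀ : Submodule K A} {R : B ⊗[K] A →ₗ[K] A ⊗[K] B}
    {m : A ⊗[K] B →ₗ[K] A ⊗[K] B →ₗ[K] A ⊗[K] B} (hm : IsAltMul K A B A₀ R m)
    (hdec : Codisjoint (Submodule.span K {(1 : A)}) A₀) (a a' : A) (b b' : B) :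
    m (a ⊗ₜ b) (a' ⊗ₜ b') = map (mulLeft K a) (mulLeft K b') (R (b ⊗ₜ a')) := by
  obtain ⟨k, a₀, ha₀, rfl⟩ := exists_eq_smul_one_add_of_codisjoint hdec a
  rw [add_tmul, ← smul_tmul', map_add, map_smul, LinearMap.add_apply, LinearMap.smul_apply,
    hm.1, hm.2 a₀ ha₀]
  induction R (b ⊗ₜ a') using TensorProduct.induction_on with
  | zero => simp
  | tmul x y => simp [add_mul, smul_mul_assoc, smul_tmul', add_tmul, mul_comm]
  | add x y hx hy => rw [map_add, map_add, map_add, ← hx, ← hy, smul_add]; abel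

local notation "𝒞" q:max => AdjoinRoot (X ^ 2 - C q)

local notation "𝓋" q:max => AdjoinRoot.root (X ^ 2 - C q)

theorem clToTensor_apply {K A : Type*} [Field K] [NonAssocRing A] [Module K A] (q : K)
    (a b : A) : clToTensor K A q (a, b) = a ⊗ₜ 1 + b ⊗ₜ 𝓋 q :=
  rfl

theorem clToTensor_bijective (K A : Type*) [Field K] [NonAssocRing A] [Module K A] (q : K) :
    Function.Bijective (clToTensor K A q) := by
  let e : (A × A) ≃ₗ[K] A ⊗[K] 𝒞 q := (LinearEquiv.finTwoArrow K A).symm ≪≫ₗ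
    (Finsupp.linearEquivFunOnFinite K A (Fin 2)).symm ≪≫ₗ
    (equivFinsuppOfBasisRight (AdjoinRoot.basisX_sq_sub_C q)).symm
  have he : ⇑(clToTensor K A q) = e := by
    funext ⟨a, b⟩
    simp [e, clToTensor_apply, Finsupp.sum_fintype]
  exact he ▸ e.bijective

section CliffordTwist

open AdjoinRoot

variable {K A : Type*} [Field K] [NonAssocRing A] [Module K A]
  {σ : A →ₗ[K] A} {q : K} {R : 𝒞 q ⊗[K] A →ₗ[K] A ⊗[K] 𝒞 q}

theorem twist_tmul_one (hσone : σ 1 = 1) (hR1 : ∀ a : A, R (1 ⊗ₜ a) = a ⊗ₜ 1)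
    (hRv : ∀ a : A, R (𝓋 q ⊗ₜ a) = σ a ⊗ₜ 𝓋 q) (b : 𝒞 q) :
    R (b ⊗ₜ 1) = 1 ⊗ₜ b := by
  refine LinearMap.congr_fun (linearMap_ext_X_sq_sub_C q
    (f := R ∘ₗ (TensorProduct.mk K (𝒞 q) A).flip 1) (g := TensorProduct.mk K A (𝒞 q) 1)
    ?_ ?_) b <;> simp [hR1, hRv, hσone]

theorem twist_tmul_mul [SMulCommClass K A A] [IsScalarTower K A A]
    (hσmul : ∀ x y : A, σ (x * y) = σ x * σ y) (hR1 : ∀ a : A, R (1 ⊗ₜ a) = a ⊗ₜ 1)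
    (hRv : ∀ a : A, R (𝓋 q ⊗ₜ a) = σ a ⊗ₜ 𝓋 q) (a a' : A) (b : 𝒞 q) :
    R (b ⊗ₜ (a * a')) = attpRmul K A (𝒞 q) R a' (R (b ⊗ₜ a)) := by
  refine LinearMap.congr_fun (linearMap_ext_X_sq_sub_C q
    (f := R ∘ₗ (TensorProduct.mk K (𝒞 q) A).flip (a * a'))
    (g := attpRmul K A (𝒞 q) R a' ∘ₗ R ∘ₗ (TensorProduct.mk K (𝒞 q) A).flip a) ?_ ?_) b <;>
    simp [hR1, hRv, hσmul, attpRmul_tmul]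

theorem twist_mul_tmul (hσinv : ∀ x : A, σ (σ x) = x) (hR1 : ∀ a : A, R (1 ⊗ₜ a) = a ⊗ₜ 1)
    (hRv : ∀ a : A, R (𝓋 q ⊗ₜ a) = σ a ⊗ₜ 𝓋 q) (a : A) (b b' : 𝒞 q) :
    R ((b * b') ⊗ₜ a) = attpLmul K A (𝒞 q) R b (R (b' ⊗ₜ a)) := by
  have mul_root : ∀ b : 𝒞 q,
      R ((b * 𝓋 q) ⊗ₜ a) = lTensor A (mulLeft K (𝓋 q : 𝒞 q)) (R (b ⊗ₜ σ a)) := fun b =>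
    LinearMap.congr_fun (linearMap_ext_X_sq_sub_C q
      (f := R ∘ₗ (TensorProduct.mk K (𝒞 q) A).flip a ∘ₗ mulRight K (𝓋 q))
      (g := lTensor A (mulLeft K (𝓋 q)) ∘ₗ R ∘ₗ (TensorProduct.mk K (𝒞 q) A).flip (σ a))
      (by simp [hR1, hRv]) (by simp [hR1, hRv, hσinv, root_mul_root_X_sq_sub_C])) b
  refine LinearMap.congr_fun (linearMap_ext_X_sq_sub_C q
    (f := R ∘ₗ (TensorProduct.mk K (𝒞 q) A).flip a ∘ₗ mulLeft K b)
    (g := attpLmul K A (𝒞 q) R b ∘ₗ R ∘ₗ (TensorProduct.mk K (𝒞 q) A).flip a) ?_ ?_) b' <;>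
    simp [hR1, hRv, mul_root, attpLmul_tmul]

theorem isAltTwistingMap_of_root_tmul [SMulCommClass K A A] [IsScalarTower K A A]
    (hσmul : ∀ x y : A, σ (x * y) = σ x * σ y) (hσone : σ 1 = 1)
    (hσinv : ∀ x : A, σ (σ x) = x) (A₀ : Submodule K A) (hR1 : ∀ a : A, R (1 ⊗ₜ a) = a ⊗ₜ 1)
    (hRv : ∀ a : A, R (𝓋 q ⊗ₜ a) = σ a ⊗ₜ 𝓋 q) :
    IsAltTwistingMap K A (𝒞 q) A₀ R :=
  ⟨hR1, twist_tmul_one hσone hR1 hRv, twist_tmul_mul hσmul hR1 hRv,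
    fun a _ => twist_mul_tmul hσinv hR1 hRv a⟩

theorem clToTensor_clMul [SMulCommClass K A A] (hR1 : ∀ a : A, R (1 ⊗ₜ a) = a ⊗ₜ 1)
    (hRv : ∀ a : A, R (𝓋 q ⊗ₜ a) = σ a ⊗ₜ 𝓋 q)
    {m : A ⊗[K] 𝒞 q →ₗ[K] A ⊗[K] 𝒞 q →ₗ[K] A ⊗[K] 𝒞 q}
    (hm : ∀ (a a' : A) (b b' : 𝒞 q), m (a ⊗ₜ b) (a' ⊗ₜ b') =
      TensorProduct.map (mulLeft K a) (mulLeft K b' : 𝒞 q →ₗ[K] 𝒞 q) (R (b ⊗ₜ a')))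
    (x y : A × A) :
    clToTensor K A q (clMul K A σ q x y) = m (clToTensor K A q x) (clToTensor K A q y) := by
  obtain ⟨a, b⟩ := x
  obtain ⟨c, d⟩ := y
  simp only [clMul, clToTensor_apply, map_add, LinearMap.add_apply, hm, hR1, hRv, map_tmul,
    mulLeft_apply, mul_one, one_mul, root_mul_root_X_sq_sub_C, add_tmul, tmul_smul, smul_tmul']
  abel

end CliffordTwist

theorem stmt4_general (K A : Type*) [Field K]
    [NonAssocRing A] [Module K A] [SMulCommClass K A A] [IsScalarTower K A A]
    (σ : A →ₗ[K] A) (hσmul : ∀ x y : A, σ (x * y) = σ x * σ y)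
    (hσone : σ 1 = 1) (hσinv : ∀ x : A, σ (σ x) = x)
    (q : K)
    (A₀ : Submodule K A) (hdec : IsCompl (Submodule.span K {(1 : A)}) A₀)
    (R : (AdjoinRoot (Polynomial.X ^ 2 - Polynomial.C q)) ⊗[K] A →ₗ[K]
         A ⊗[K] (AdjoinRoot (Polynomial.X ^ 2 - Polynomial.C q)))
    (hR1 : ∀ a : A,
      R ((1 : AdjoinRoot (Polynomial.X ^ 2 - Polynomial.C q)) ⊗ₜ[K] a) = a ⊗ₜ[K] 1)
    (hRv : ∀ a : A,
      R ((AdjoinRoot.root (Polynomial.X ^ 2 - Polynomial.C q)) ⊗ₜ[K] a) =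
        σ a ⊗ₜ[K] AdjoinRoot.root (Polynomial.X ^ 2 - Polynomial.C q))
    (m : A ⊗[K] (AdjoinRoot (Polynomial.X ^ 2 - Polynomial.C q)) →ₗ[K]
         A ⊗[K] (AdjoinRoot (Polynomial.X ^ 2 - Polynomial.C q)) →ₗ[K]
         A ⊗[K] (AdjoinRoot (Polynomial.X ^ 2 - Polynomial.C q)))
    (hm : IsAltMul K A (AdjoinRoot (Polynomial.X ^ 2 - Polynomial.C q)) A₀ R m) :
    IsAltTwistingMap K A (AdjoinRoot (Polynomial.X ^ 2 - Polynomial.C q)) A₀ R ∧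
    Function.Bijective (clToTensor K A q) ∧
    clToTensor K A q ((1 : A), (0 : A)) =
      (1 : A) ⊗ₜ[K] (1 : AdjoinRoot (Polynomial.X ^ 2 - Polynomial.C q)) ∧
    (∀ x y : A × A,
      clToTensor K A q (clMul K A σ q x y) = m (clToTensor K A q x) (clToTensor K A q y)) := by
  refine ⟨isAltTwistingMap_of_root_tmul hσmul hσone hσinv A₀ hR1 hRv, clToTensor_bijective K A q,
    by rw [clToTensor_apply, zero_tmul, add_zero], clToTensor_clMul hR1 hRv ?_⟩
  exact hm.apply_tmul_tmul hdec.codisjoint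

/-- for an algebra `A` with involutive automorphism `σ`, any decomposition
`A = K·1 ⊕ A₀` and `q ≠ 0`, the map `R : C(K,q) ⊗ A → A ⊗ C(K,q)` with
`R(1⊗a) = a⊗1`, `R(v⊗a) = σ(a)⊗v` is an alternative twisting map, and
`a + bv ↦ a⊗1 + b⊗v` is an isomorphism of unital algebras `Cl(A) ≅ A ⊗̄_R C(K,q)`. -/
theorem stmt4 (K A : Type*) [Field K]
    [NonAssocRing A] [Module K A] [SMulCommClass K A A] [IsScalarTower K A A]
    (σ : A →ₗ[K] A) (hσmul : ∀ x y : A, σ (x * y) = σ x * σ y)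
    (hσone : σ 1 = 1) (hσinv : ∀ x : A, σ (σ x) = x)
    (q : K) (hq : q ≠ 0)
    (A₀ : Submodule K A) (hdec : IsCompl (Submodule.span K {(1 : A)}) A₀)
    (R : (AdjoinRoot (Polynomial.X ^ 2 - Polynomial.C q)) ⊗[K] A →ₗ[K]
         A ⊗[K] (AdjoinRoot (Polynomial.X ^ 2 - Polynomial.C q)))
    (hR1 : ∀ a : A,
      R ((1 : AdjoinRoot (Polynomial.X ^ 2 - Polynomial.C q)) ⊗ₜ[K] a) = a ⊗ₜ[K] 1)
    (hRv : ∀ a : A,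
      R ((AdjoinRoot.root (Polynomial.X ^ 2 - Polynomial.C q)) ⊗ₜ[K] a) =
        σ a ⊗ₜ[K] AdjoinRoot.root (Polynomial.X ^ 2 - Polynomial.C q))
    (m : A ⊗[K] (AdjoinRoot (Polynomial.X ^ 2 - Polynomial.C q)) →ₗ[K]
         A ⊗[K] (AdjoinRoot (Polynomial.X ^ 2 - Polynomial.C q)) →ₗ[K]
         A ⊗[K] (AdjoinRoot (Polynomial.X ^ 2 - Polynomial.C q)))
    (hm : IsAltMul K A (AdjoinRoot (Polynomial.X ^ 2 - Polynomial.C q)) A₀ R m) :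
    IsAltTwistingMap K A (AdjoinRoot (Polynomial.X ^ 2 - Polynomial.C q)) A₀ R ∧
    Function.Bijective (clToTensor K A q) ∧
    clToTensor K A q ((1 : A), (0 : A)) =
      (1 : A) ⊗ₜ[K] (1 : AdjoinRoot (Polynomial.X ^ 2 - Polynomial.C q)) ∧
    (∀ x y : A × A,
      clToTensor K A q (clMul K A σ q x y) = m (clToTensor K A q x) (clToTensor K A q y)) :=
  stmt4_general K A σ hσmul hσone hσinv q A₀ hdec R hR1 hRv m hm
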